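/- Exact variational characterization of the SIM for the Davis–Skodje model: let γ > 1 and let z be a solution of the Davis–Skodje model of the form z₁(t) = c₁·e^{−t}, z₂(t) = c₂·e^{−γt} + c₁/(c₁+e^{t}) with c₁ ≥ 0. Then for all t, the Lagrangian-type integrand satisfies ‖∂_t z(t)‖₂² − (γ/(1+z₁(t)))·‖z(t)‖₂² = F₀(t) + (γ² − γ/(1+z₁(t)))·c₂²·e^{−2γt}, where F₀(t) is the corresponding value for the solution with the same c₁ and c₂ = 0, and γ² − γ/(1+z₁(t)) ≥ γ(γ−1) > 0. Consequently, for any t₀ < t_f and a ≥ 0, among all such solutions with z₁(t_f) = a, the functional ∫_{t₀}^{t_f} (‖∂_t z(t)‖₂² − (γ/(1+z₁(t)))·‖z(t)‖₂²) dt is uniquely minimized by the solution with c₂ = 0, which lies on the SIM z₂ = z₁/(1+z₁). -/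

import Mathlib

/-!
Write `x = c₁ e^{-t}` for the first component and `w = c₁/(c₁ + eᵗ) = x/(1 + x)` for the SIM
part of the second one. Then `∂ₜ w = -x/(1 + x)² = -w/(1 + x)`, so in the Lagrangian the terms
linear in `c₂` cancel: `2γ c₂ e^{-γt} (-∂ₜ w) - (γ/(1 + x)) · 2 c₂ e^{-γt} w = 0`. What remains of
the `c₂`-dependence is `(γ² - γ/(1 + x)) c₂² e^{-2γt}`, whose weight is at least `γ(γ - 1) > 0`
because `x ≥ 0`. Integrating, the functional is that of the SIM solution plus `c₂²` times a
positive number.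
-/

open Real

/-- The Lagrangian-type integrand ‖∂_t z(t)‖₂² − (γ/(1+z₁(t)))·‖z(t)‖₂² evaluated
on the Davis–Skodje solution z₁(t) = c₁·e^{−t}, z₂(t) = c₂·e^{−γt} + c₁/(c₁+e^{t}). -/
noncomputable def dsLagrangian (γ c₁ c₂ t : ℝ) : ℝ :=
  (deriv (fun s => c₁ * Real.exp (-s)) t) ^ 2
    + (deriv (fun s => c₂ * Real.exp (-γ * s) + c₁ / (c₁ + Real.exp s)) t) ^ 2
    - (γ / (1 + c₁ * Real.exp (-t)))
        * ((c₁ * Real.exp (-t)) ^ 2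
            + (c₂ * Real.exp (-γ * t) + c₁ / (c₁ + Real.exp t)) ^ 2)

/-- The functional ∫_{t₀}^{t_f} (‖∂_t z‖₂² − (γ/(1+z₁))·‖z‖₂²) dt for the
Davis–Skodje solution with constants c₁, c₂. -/
noncomputable def dsFunctional (γ t₀ tf c₁ c₂ : ℝ) : ℝ :=
  ∫ t in t₀..tf, dsLagrangian γ c₁ c₂ t

lemma hasDerivAt_const_mul_exp_mul (c k t : ℝ) :
    HasDerivAt (fun s => c * exp (k * s)) (k * (c * exp (k * t))) t :=
  (((hasDerivAt_id' t).const_mul k).exp.const_mul c).congr_deriv (by ring)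

lemma hasDerivAt_div_const_add_exp {c t : ℝ} (h : c + exp t ≠ 0) :
    HasDerivAt (fun s => c / (c + exp s)) (-(c * exp t) / (c + exp t) ^ 2) t :=
  ((hasDerivAt_const t c).fun_div ((hasDerivAt_exp t).const_add c) h).congr_deriv (by ring)

lemma dsLagrangian_eq {γ c₁ : ℝ} (hc : 0 ≤ c₁) (c₂ t : ℝ) :
    dsLagrangian γ c₁ c₂ t
      = (c₁ * exp (-t)) ^ 2 + (γ * c₂ * exp (-γ * t) + c₁ * exp t / (c₁ + exp t) ^ 2) ^ 2
        - γ / (1 + c₁ * exp (-t))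
          * ((c₁ * exp (-t)) ^ 2 + (c₂ * exp (-γ * t) + c₁ / (c₁ + exp t)) ^ 2) := by
  have hz₁ : HasDerivAt (fun s => c₁ * exp (-s)) (-(c₁ * exp (-t))) t := by
    simpa using hasDerivAt_const_mul_exp_mul c₁ (-1) t
  have hz₂ : HasDerivAt (fun s => c₂ * exp (-γ * s) + c₁ / (c₁ + exp s))
      (-γ * (c₂ * exp (-γ * t)) + -(c₁ * exp t) / (c₁ + exp t) ^ 2) t :=
    (hasDerivAt_const_mul_exp_mul c₂ (-γ) t).add (hasDerivAt_div_const_add_exp (by positivity))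
  rw [dsLagrangian, hz₁.deriv, hz₂.deriv]
  ring

lemma dsLagrangian_eq_add {γ c₁ : ℝ} (hc : 0 ≤ c₁) (c₂ t : ℝ) :
    dsLagrangian γ c₁ c₂ t
      = dsLagrangian γ c₁ 0 t
        + (γ ^ 2 - γ / (1 + c₁ * exp (-t))) * c₂ ^ 2 * exp (-2 * γ * t) := by
  have hexp : exp (-2 * γ * t) = exp (-γ * t) ^ 2 := by rw [← exp_nat_mul]; ring_nf
  have hne : c₁ + exp t ≠ 0 := by positivity
  rw [dsLagrangian_eq hc, dsLagrangian_eq hc, hexp, exp_neg]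
  field_simp
  ring

lemma mul_sub_one_le_sq_sub_div_one_add {γ x : ℝ} (hγ : 0 ≤ γ) (hx : 0 ≤ x) :
    γ * (γ - 1) ≤ γ ^ 2 - γ / (1 + x) := by
  have : γ / (1 + x) ≤ γ := div_le_self hγ (by linarith)
  linarith

lemma continuous_dsLagrangian {γ c₁ : ℝ} (hc : 0 ≤ c₁) (c₂ : ℝ) :
    Continuous (dsLagrangian γ c₁ c₂) := by
  rw [funext (dsLagrangian_eq hc c₂)]
  fun_prop (disch := intro; positivity)

lemma dsFunctional_eq_add {γ c₁ : ℝ} (hc : 0 ≤ c₁) (t₀ tf c₂ : ℝ) :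
    dsFunctional γ t₀ tf c₁ c₂
      = dsFunctional γ t₀ tf c₁ 0
        + c₂ ^ 2 * ∫ t in t₀..tf, (γ ^ 2 - γ / (1 + c₁ * exp (-t))) * exp (-2 * γ * t) := by
  rw [← sub_eq_iff_eq_add', dsFunctional, dsFunctional,
    ← intervalIntegral.integral_sub ((continuous_dsLagrangian hc c₂).intervalIntegrable _ _)
      ((continuous_dsLagrangian hc 0).intervalIntegrable _ _),
    ← intervalIntegral.integral_const_mul]
  congr 1 with t
  rw [dsLagrangian_eq_add hc c₂ t]
  ring

lemma integral_weight_pos {γ c₁ t₀ tf : ℝ} (hγ : 1 < γ) (hc : 0 ≤ c₁) (h : t₀ < tf) :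
    0 < ∫ t in t₀..tf, (γ ^ 2 - γ / (1 + c₁ * exp (-t))) * exp (-2 * γ * t) := by
  refine intervalIntegral.intervalIntegral_pos_of_pos ?_ (fun t => ?_) h
  · exact Continuous.intervalIntegrable (by fun_prop (disch := intro; positivity)) _ _
  · have hweight : 0 < γ ^ 2 - γ / (1 + c₁ * exp (-t)) :=
      (mul_pos (zero_lt_one.trans hγ) (sub_pos.2 hγ)).trans_le
        (mul_sub_one_le_sq_sub_div_one_add (zero_le_one.trans hγ.le) (by positivity))
    exact mul_pos hweight (exp_pos _)

lemma div_add_exp_eq_div_one_add (c t : ℝ) :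
    c / (c + exp t) = c * exp (-t) / (1 + c * exp (-t)) := by
  have h : 1 + c * exp (-t) = (c + exp t) * exp (-t) := by
    rw [add_mul, ← exp_add, add_neg_cancel, exp_zero, add_comm]
  rw [h, mul_div_mul_right _ _ (exp_ne_zero _)]

theorem stmt11 (γ : ℝ) (hγ : 1 < γ) :
    (∀ c₁ : ℝ, 0 ≤ c₁ → ∀ c₂ t : ℝ,
      dsLagrangian γ c₁ c₂ t
        = dsLagrangian γ c₁ 0 t
          + (γ ^ 2 - γ / (1 + c₁ * exp (-t))) * c₂ ^ 2 * exp (-2 * γ * t) ∧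
      γ * (γ - 1) ≤ γ ^ 2 - γ / (1 + c₁ * exp (-t)) ∧
      0 < γ * (γ - 1)) ∧
    (∀ t₀ tf : ℝ, t₀ < tf → ∀ a : ℝ, 0 ≤ a →
      (∀ c₁ c₂ : ℝ, 0 ≤ c₁ → c₁ * exp (-tf) = a →
        dsFunctional γ t₀ tf (a * exp tf) 0 ≤ dsFunctional γ t₀ tf c₁ c₂ ∧
        (dsFunctional γ t₀ tf c₁ c₂ = dsFunctional γ t₀ tf (a * exp tf) 0 ↔
          c₂ = 0)) ∧
      (∀ t : ℝ,
        (0 : ℝ) * exp (-γ * t) + (a * exp tf) / (a * exp tf + exp t)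
          = (a * exp tf * exp (-t)) / (1 + a * exp tf * exp (-t)))) := by
  have hγ₀ : 0 ≤ γ := zero_le_one.trans hγ.le
  refine ⟨fun c₁ hc c₂ t => ⟨dsLagrangian_eq_add hc c₂ t,
    mul_sub_one_le_sq_sub_div_one_add hγ₀ (by positivity),
    mul_pos (zero_lt_one.trans hγ) (sub_pos.2 hγ)⟩, fun t₀ tf h a _ => ⟨?_, fun t => ?_⟩⟩
  · intro c₁ c₂ hc hcf
    have hc₁ : a * exp tf = c₁ := by
      rw [← hcf, mul_assoc, ← exp_add, neg_add_cancel, exp_zero, mul_one]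
    have hweight := integral_weight_pos hγ hc h
    rw [hc₁, dsFunctional_eq_add hc t₀ tf c₂]
    exact ⟨le_add_of_nonneg_right (mul_nonneg (sq_nonneg c₂) hweight.le),
      by rw [add_eq_left, mul_eq_zero, or_iff_left hweight.ne', sq_eq_zero_iff]⟩
  · rw [zero_mul, zero_add, div_add_exp_eq_div_one_add]
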